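/- arXiv:2002.00052 — 5 statements merged into one kernel-verified Lean document; each statement's English description precedes it below -/
import Mathlib

section
/- Let k ≥ 2 be an integer and let f, g ∈ ℂ⟦z⟧ be formal power series with constant coefficient g(0) ≠ 0. If z^k·f′ = g·f (where f′ is the formal derivative), then f = 0. -/
/-- If `k ≥ 2` and `f, g ∈ ℂ⟦z⟧` with `g(0) ≠ 0` satisfy `z^k·f′ = g·f`, then `f = 0`. -/
theorem powerSeries_eq_zero_of_irregular_ode (k : ℕ) (hk : 2 ≤ k) (f g : PowerSeries ℂ)
    (hg : PowerSeries.constantCoeff g ≠ 0)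
    (h : (PowerSeries.X : PowerSeries ℂ) ^ k * PowerSeries.derivativeFun f = g * f) :
    f = 0 := by
  by_contra hf
  have hfin : f.order < ⊤ := PowerSeries.order_finite_iff_ne_zero.mpr hf
  set n : ℕ := f.order.lift hfin with hn
  have hfn : PowerSeries.coeff n f ≠ 0 := by
    convert PowerSeries.coeff_order hf using 3
    apply ENat.coe_inj.mp
    rw [ENat.coe_toNat hfin.ne, hn, ENat.coe_lift]
  have hlt : ∀ m : ℕ, m < n → PowerSeries.coeff m f = 0 := by
    intro m hm
    apply PowerSeries.coeff_of_lt_order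
    have : f.order = (n : ℕ∞) := by simp [hn]
    rw [this]
    exact_mod_cast hm
  have hco := congrArg (PowerSeries.coeff n) h
  rw [PowerSeries.coeff_X_pow_mul'] at hco
  have hrhs : PowerSeries.coeff n (g * f) =
      PowerSeries.constantCoeff g * PowerSeries.coeff n f := by
    rw [PowerSeries.coeff_mul]
    rw [Finset.sum_eq_single (0, n)]
    · simp [PowerSeries.coeff_zero_eq_constantCoeff]
    · rintro ⟨i, j⟩ hij hne
      rw [Finset.HasAntidiagonal.mem_antidiagonal] at hij
      have hj : j < n := by
        rcases Nat.lt_or_ge j n with h' | h'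
        · exact h'
        · exfalso; apply hne
          have : j = n := le_antisymm (hij ▸ Nat.le_add_left j i) h'
          subst this
          have : i = 0 := by omega
          simp [this]
      rw [hlt j hj, mul_zero]
    · intro hmem
      exfalso; exact hmem (Finset.HasAntidiagonal.mem_antidiagonal.mpr (by omega))
  rw [hrhs] at hco
  have hlhs : (if k ≤ n then PowerSeries.coeff (n - k) f.derivativeFun else 0) = 0 := by
    split_ifs with hkn
    · rw [show f.derivativeFun = PowerSeries.derivative ℂ f from rfl, PowerSeries.coeff_derivativeFun]
      have : n - k + 1 < n := by omega
      rw [hlt _ this, zero_mul]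
    · rfl
  rw [hlhs] at hco
  exact hfn ((mul_eq_zero.mp hco.symm).resolve_left hg)
end

section
/- Let k ≥ 2 be an integer and let M be a diagonal n×n matrix over ℂ⟦z⟧ whose diagonal constant terms M₁₁(0), …, M_{nn}(0) are pairwise distinct. If F is an n×n matrix over ℂ⟦z⟧ satisfying z^k·F′ = M·F − F·M (entrywise formal derivative), then F is a constant diagonal matrix: all off-diagonal entries of F vanish and each diagonal entry is a constant power series. (Applied with M = z^k Q′ + z^{k−1}Λ, where Q = diag(q₁,…,q_n) is a diagonal matrix of Laurent polynomials in z⁻¹ of pole order k−1 with pairwise distinct leading coefficients and Λ is the exponent of formal monodromy, this says: any formal power-series gauge transformation F̂ with F̂[A⁰] = A⁰, for a generic diagonal normal form A⁰ = dQ + Λ dz/z with pole order k ≥ 2, lies in the diagonal torus T ⊂ GL_n(ℂ).) -/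
open PowerSeries

/-- If `z^k g' = u g` with `k ≥ 2` and `u(0) ≠ 0`, then `g = 0`. -/
lemma aux_zero {k : ℕ} (hk : 2 ≤ k) (u g : PowerSeries ℂ)
    (hu : PowerSeries.constantCoeff u ≠ 0)
    (h : (PowerSeries.X : PowerSeries ℂ) ^ k * g.derivativeFun = u * g) : g = 0 := by
  ext m
  rw [map_zero]
  induction m using Nat.strong_induction_on with
  | _ m ih =>
    have ih' : ∀ b < m, PowerSeries.coeff b g = 0 := fun b hb => ih b hb
    have h1 := congrArg (PowerSeries.coeff m) h
    rw [PowerSeries.coeff_X_pow_mul', PowerSeries.coeff_mul] at h1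
    have hrhs : ∑ p ∈ Finset.HasAntidiagonal.antidiagonal m,
        PowerSeries.coeff p.1 u * PowerSeries.coeff p.2 g
        = PowerSeries.constantCoeff u * PowerSeries.coeff m g := by
      rw [Finset.sum_eq_single (0, m)]
      · simp [PowerSeries.coeff_zero_eq_constantCoeff]
      · rintro ⟨a, b⟩ hab hne
        rw [Finset.HasAntidiagonal.mem_antidiagonal] at hab
        have hb : b < m := by
          rcases Nat.lt_or_ge b m with h' | h'
          · exact h'
          · exfalso; apply hne
            have : b = m := le_antisymm (hab ▸ Nat.le_add_left b a) h'
            subst this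
            have : a = 0 := by omega
            simp [this]
        rw [ih' b hb, mul_zero]
      · intro h'
        exact absurd (Finset.HasAntidiagonal.mem_antidiagonal.mpr (by simp)) h'
    rw [hrhs] at h1
    have hlhs : (if k ≤ m then PowerSeries.coeff (m - k) g.derivativeFun else 0) = 0 := by
      split_ifs with hkm
      · rw [show g.derivativeFun = PowerSeries.derivative ℂ g from rfl, PowerSeries.coeff_derivative]
        have : m - k + 1 < m := by omega
        rw [ih' _ this, zero_mul]
      · rfl
    rw [hlhs] at h1
    have := h1.symm
    rcases mul_eq_zero.mp this with h' | h'
    · exact absurd h' hu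
    · exact h'

lemma aux_const (g : PowerSeries ℂ) (hg : g.derivativeFun = 0) :
    ∃ c : ℂ, g = PowerSeries.C c := by
  refine ⟨PowerSeries.constantCoeff g, ?_⟩
  ext m
  cases m with
  | zero => simp
  | succ m =>
    have := congrArg (PowerSeries.coeff m) hg
    rw [show g.derivativeFun = PowerSeries.derivative ℂ g from rfl, PowerSeries.coeff_derivative, map_zero] at this
    have hm : (m : ℂ) + 1 ≠ 0 := by exact_mod_cast Nat.succ_ne_zero m
    have : PowerSeries.coeff (m + 1) g = 0 := by
      rcases mul_eq_zero.mp this with h' | h'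
      · exact h'
      · exact absurd h' (by exact_mod_cast hm)
    simp [this, PowerSeries.coeff_C]

/-- **Uniqueness of formal isomorphisms, irregular case.** Let `k ≥ 2` and let `M` be a
diagonal matrix over `ℂ⟦z⟧` whose diagonal constant terms are pairwise distinct. If a
matrix `F` over `ℂ⟦z⟧` satisfies `z^k·F′ = M·F − F·M` (entrywise formal derivative), then
`F` is a constant diagonal matrix. (Applied with `M = z^k Q′ + z^{k−1} Λ` this says any
formal gauge transformation stabilising a generic diagonal normal form
`A⁰ = dQ + Λ dz/z` of pole order `k ≥ 2` lies in the diagonal torus `T ⊂ GL_n(ℂ)`.) -/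
theorem formal_stabiliser_is_constant_diagonal (n k : ℕ) (hk : 2 ≤ k)
    (M F : Matrix (Fin n) (Fin n) (PowerSeries ℂ)) (hM : M.IsDiag)
    (hM0 : ∀ i j : Fin n, i ≠ j →
      PowerSeries.constantCoeff (M i i) ≠ PowerSeries.constantCoeff (M j j))
    (hF : ((PowerSeries.X : PowerSeries ℂ) ^ k) • F.map PowerSeries.derivativeFun =
      M * F - F * M) :
    F.IsDiag ∧ ∀ i : Fin n, ∃ c : ℂ, F i i = PowerSeries.C c := by
  have hMd : M = Matrix.diagonal (fun i => M i i) := by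
    refine Matrix.ext fun i j => ?_
    by_cases hij : i = j
    · subst hij; simp
    · rw [Matrix.diagonal_apply_ne _ hij]
      exact hM hij
  have hentry : ∀ i j : Fin n,
      (PowerSeries.X : PowerSeries ℂ) ^ k * (F i j).derivativeFun
        = (M i i - M j j) * F i j := by
    intro i j
    have := congrFun (congrFun hF i) j
    rw [Matrix.smul_apply, Matrix.sub_apply, hMd, Matrix.diagonal_mul, Matrix.mul_diagonal]
      at this
    rw [smul_eq_mul] at this
    rw [Matrix.map_apply] at this
    rw [this]
    ring
  constructor
  · intro i j hij
    refine aux_zero hk (M i i - M j j) (F i j) ?_ (hentry i j)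
    rw [map_sub]
    exact sub_ne_zero.mpr (hM0 i j hij)
  · intro i
    have h := hentry i i
    rw [sub_self, zero_mul] at h
    have hX : ((PowerSeries.X : PowerSeries ℂ) ^ k) ≠ 0 := pow_ne_zero _ PowerSeries.X_ne_zero
    have : (F i i).derivativeFun = 0 := by
      rcases mul_eq_zero.mp h with h' | h'
      · exact absurd h' hX
      · exact h'
    exact aux_const _ this
end

section
/- Let Λ = diag(λ₁, …, λ_n) be a diagonal complex matrix with λ_i − λ_j ∉ ℤ for all i ≠ j. If F is an n×n matrix over ℂ⟦z⟧ satisfying z·F′ = Λ·F − F·Λ (entrywise formal derivative), then F is a constant diagonal matrix. -/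
/-- **Uniqueness of formal isomorphisms, simple pole case.** Let `Λ = diag(λ₁,…,λ_n)` with
`λᵢ − λⱼ ∉ ℤ` for `i ≠ j`. If a matrix `F` over `ℂ⟦z⟧` satisfies `z·F′ = Λ·F − F·Λ`
(entrywise formal derivative), then `F` is a constant diagonal matrix. -/
theorem formal_stabiliser_is_constant_diagonal_logCase (n : ℕ) (lam : Fin n → ℂ)
    (hlam : ∀ i j : Fin n, i ≠ j → ∀ z : ℤ, lam i - lam j ≠ (z : ℂ))
    (F : Matrix (Fin n) (Fin n) (PowerSeries ℂ))
    (hF : (PowerSeries.X : PowerSeries ℂ) • F.map PowerSeries.derivativeFun =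
      Matrix.diagonal (fun i => PowerSeries.C (lam i)) * F -
        F * Matrix.diagonal (fun i => PowerSeries.C (lam i))) :
    F.IsDiag ∧ ∀ i : Fin n, ∃ c : ℂ, F i i = PowerSeries.C c := by
  have key : ∀ i j : Fin n, ∀ k : ℕ,
      (k : ℂ) * PowerSeries.coeff k (F i j) =
        (lam i - lam j) * PowerSeries.coeff k (F i j) := by
    intro i j k
    have h := congrFun (congrFun hF i) j
    simp only [Matrix.smul_apply, Matrix.map_apply, Matrix.sub_apply,
      Matrix.diagonal_mul, Matrix.mul_diagonal, smul_eq_mul] at h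
    have h2 := congrArg (PowerSeries.coeff k) h
    cases k with
    | zero =>
      simp only [PowerSeries.coeff_zero_eq_constantCoeff, map_mul, map_sub,
        PowerSeries.constantCoeff_X, zero_mul, PowerSeries.constantCoeff_C] at h2
      simp only [Nat.cast_zero, zero_mul, PowerSeries.coeff_zero_eq_constantCoeff]
      linear_combination h2
    | succ m =>
      rw [PowerSeries.coeff_succ_X_mul, show PowerSeries.coeff m (F i j).derivativeFun = _ from
        PowerSeries.coeff_derivative (F i j) m] at h2
      simp only [map_sub, map_mul, PowerSeries.coeff_C_mul] at h2
      have h3 : PowerSeries.coeff (m+1) (F i j * PowerSeries.C (lam j)) =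
          PowerSeries.coeff (m+1) (F i j) * lam j := by
        simpa using PowerSeries.coeff_mul_C (m+1) (F i j) (lam j)
      rw [h3] at h2
      push_cast
      linear_combination h2
  constructor
  · intro i j hij
    ext k
    have h := key i j k
    have hne : (lam i - lam j : ℂ) ≠ (k : ℂ) := by
      have := hlam i j hij (k : ℤ)
      simpa using this
    have : ((k : ℂ) - (lam i - lam j)) * PowerSeries.coeff k (F i j) = 0 := by
      linear_combination h
    rcases mul_eq_zero.mp this with h0 | h0
    · exact absurd (by linear_combination h0) (Ne.symm hne)
    · simpa using h0
  · intro i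
    refine ⟨PowerSeries.coeff 0 (F i i), ?_⟩
    ext k
    rw [PowerSeries.coeff_C]
    cases k with
    | zero => simp
    | succ m =>
      have h := key i i (m+1)
      simp only [sub_self, zero_mul] at h
      have : PowerSeries.coeff (m+1) (F i i) = 0 := by
        have hm : ((m : ℂ) + 1) ≠ 0 := Nat.cast_add_one_ne_zero m
        push_cast at h
        exact (mul_eq_zero.mp h).resolve_left hm
      simp [this]
end

section
/- Fix θ₀ ∈ ℝ, let d₁ < d₂ < ⋯ < d_l be the anti-Stokes directions in the half-period [θ₀, θ₀ + π/(k−1)), and let ≺ be the total order on {1, …, n} defined by i ≺ j iff (i,j) ∈ Roots(d_t) for some 1 ≤ t ≤ l. Then the product map Sto(d₁) × ⋯ × Sto(d_l) → GL_n(ℂ), (K₁, …, K_l) ↦ K_l·K_{l−1} ⋯ K₂·K₁, is injective, and its image is exactly {K ∈ GL_n(ℂ) : K_{ii} = 1 for all i, and K_{ij} = 0 whenever i ≠ j and not i ≺ j} — equivalently, the image is P·U₊·P⁻¹, where U₊ is the upper-triangular unipotent subgroup and P is the permutation matrix with P_{ij} = δ_{π(i),j} for the permutation π satisfying i ≺ j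 ⟺ π(i) < π(j). In particular every element of P·U₊·P⁻¹ factors uniquely as a product K_l ⋯ K₁ of Stokes factors K_t ∈ Sto(d_t). -/
/-!
Write `R_t = Roots(d_t)`. Inside a half-period the angles `(k−1)d_t` lie in a window of width `π`,
so a nonzero complex number lies on the negative ray of at most one of them: the `R_t` are pairwise
disjoint. Each `R_t` is a strict order, since negative multiples of `e^{i(k−1)d_t}` add up to
another one. If `(i,p) ∈ R_s` and `(p,j) ∈ R_t` with `d_t < d_s`, then `u_i − u_j` is a sum of
two vectors on negative rays less than `π` apart, hence (intermediate value theorem) lies on the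
negative ray of an angle strictly in between; that direction is anti-Stokes, so `(i,j) ∈ R_r` for
some `r > t`.

These combinatorial facts alone give the factorisation, by induction on `l`. With
`P = R_2 ∪ ⋯ ∪ R_l` and `Q = R_1`, the last fact says `P ∘ Q ⊆ P`, so for `B` unipotent with support
in `P` and `K₁` unipotent with support in `Q`, the product `B K₁` agrees with `K₁` off `P`. Hence
`K₁` is read off `B K₁` on `Q`, and conversely any `A` supported in `P ∪ Q` is `(A K⁻¹) K` for the
`Q`-part `K` of `A`.
-/

/-- `(i,j)` is a root of the direction `θ`: `(uᵢ − uⱼ)·exp(−√−1(k−1)θ)` is a negative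
real number. -/
def IsRoot {n : ℕ} (u : Fin n → ℂ) (k : ℕ) (i j : Fin n) (θ : ℝ) : Prop :=
  ∃ r : ℝ, r < 0 ∧ (u i - u j) * Complex.exp (-(Complex.I * ((k : ℂ) - 1) * (θ : ℂ))) = (r : ℂ)

/-- `θ` is an anti-Stokes direction: some ordered pair `(i,j)`, `i ≠ j`, is a root of `θ`. -/
def IsAntiStokes {n : ℕ} (u : Fin n → ℂ) (k : ℕ) (θ : ℝ) : Prop :=
  ∃ i j : Fin n, i ≠ j ∧ IsRoot u k i j θ

/-- Membership in the group of Stokes factors `Sto(d)`: `K_{ij} = δ_{ij}` unless `(i,j)` is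
a root of `d`. -/
def StoMem {n : ℕ} (u : Fin n → ℂ) (k : ℕ) (d : ℝ) (K : Matrix (Fin n) (Fin n) ℂ) : Prop :=
  (∀ i, K i i = 1) ∧ ∀ i j : Fin n, i ≠ j → ¬ IsRoot u k i j d → K i j = 0

open Complex Set

theorem List.prod_reverse_ofFn_succ {M : Type*} [Monoid M] {l : ℕ} (K : Fin (l + 1) → M) :
    (List.ofFn K).reverse.prod = (List.ofFn (Fin.tail K)).reverse.prod * K 0 := by
  simp [List.ofFn_succ]
  rfl

theorem Set.BijOn.prod_reverse_ofFn_succ {M : Type*} [Monoid M] {l : ℕ} {s : Fin (l + 1) → Set M}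
    {t T : Set M}
    (htail : BijOn (fun K : Fin l → M => (List.ofFn K).reverse.prod) (univ.pi fun i => s i.succ) t)
    (hstep : BijOn (fun x : M × M => x.1 * x.2) (t ×ˢ s 0) T) :
    BijOn (fun K : Fin (l + 1) → M => (List.ofFn K).reverse.prod) (univ.pi s) T := by
  have tail_mem {K : Fin (l + 1) → M} (hK : K ∈ univ.pi s) :
      Fin.tail K ∈ univ.pi fun i => s i.succ := fun i _ => hK i.succ (mem_univ _)
  have split_mem {K : Fin (l + 1) → M} (hK : K ∈ univ.pi s) :
      ((List.ofFn (Fin.tail K)).reverse.prod, K 0) ∈ t ×ˢ s 0 :=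
    ⟨htail.mapsTo (tail_mem hK), hK 0 (mem_univ _)⟩
  refine ⟨fun K hK => ?_, fun K hK K' hK' h => ?_, fun A hA => ?_⟩
  · simp only [List.prod_reverse_ofFn_succ]
    exact hstep.mapsTo (split_mem hK)
  · simp only [List.prod_reverse_ofFn_succ] at h
    obtain ⟨htl, h0⟩ := Prod.mk_inj.1 (hstep.injOn (split_mem hK) (split_mem hK') h)
    exact funext (Fin.cases h0 (congrFun (htail.injOn (tail_mem hK) (tail_mem hK') htl)))
  · obtain ⟨⟨B, K₀⟩, ⟨hB, hK₀⟩, rfl⟩ := hstep.surjOn hA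
    obtain ⟨K, hK, rfl⟩ := htail.surjOn hB
    refine ⟨Fin.cons K₀ K, mem_univ_pi.2 (Fin.cases hK₀ (mem_univ_pi.1 hK)), ?_⟩
    simp

/-- `Sto(d)` is `unipotentPattern Roots(d)`; for a strict order `S` this is the pattern group
of `S`. -/
def unipotentPattern {ι α : Type*} [Zero α] [One α] (S : ι → ι → Prop) : Set (Matrix ι ι α) :=
  {K | (∀ i, K i i = 1) ∧ ∀ i j, i ≠ j → ¬ S i j → K i j = 0}

section Pattern

variable {ι α : Type*} [Zero α] [One α] {S : ι → ι → Prop} {K : Matrix ι ι α}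

theorem eq_or_rel_of_mem_unipotentPattern (hK : K ∈ unipotentPattern S) {i j : ι}
    (h : K i j ≠ 0) : i = j ∨ S i j := by
  by_contra! hij
  exact h (hK.2 i j hij.1 hij.2)

variable [DecidableEq ι]

theorem mem_unipotentPattern_iff [Std.Irrefl S] :
    K ∈ unipotentPattern S ↔ ∀ i j, ¬ S i j → K i j = (1 : Matrix ι ι α) i j := by
  refine ⟨fun hK i j hij => ?_, fun h => ⟨fun i => ?_, fun i j hne hij => ?_⟩⟩
  · obtain rfl | hne := eq_or_ne i j
    · rw [hK.1, Matrix.one_apply_eq]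
    · rw [hK.2 i j hne hij, Matrix.one_apply_ne hne]
  · rw [h i i (irrefl i), Matrix.one_apply_eq]
  · rw [h i j hij, Matrix.one_apply_ne hne]

theorem one_mem_unipotentPattern : (1 : Matrix ι ι α) ∈ unipotentPattern S :=
  ⟨fun i => Matrix.one_apply_eq i, fun _ _ hij _ => Matrix.one_apply_ne hij⟩

theorem eq_one_of_mem_unipotentPattern (hK : K ∈ unipotentPattern S) (hS : ∀ i j, ¬ S i j) :
    K = 1 := by
  ext i j
  obtain rfl | hij := eq_or_ne i j
  · rw [hK.1, Matrix.one_apply_eq]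
  · rw [hK.2 i j hij (hS i j), Matrix.one_apply_ne hij]

def relPart (S : ι → ι → Prop) [DecidableRel S] (A : Matrix ι ι α) : Matrix ι ι α :=
  Matrix.of fun i j => if S i j then A i j else (1 : Matrix ι ι α) i j

theorem relPart_mem_unipotentPattern [Std.Irrefl S] [DecidableRel S] (A : Matrix ι ι α) :
    relPart S A ∈ unipotentPattern S :=
  mem_unipotentPattern_iff.2 fun i j hij => by simp [relPart, hij]

end Pattern

namespace Matrix

variable {ι α : Type*} [Fintype ι] [DecidableEq ι] [Ring α] {Q : ι → ι → Prop}

theorem rel_of_pow_succ_apply_ne_zero [IsTrans ι Q] {E : Matrix ι ι α}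
    (hE : ∀ i j, E i j ≠ 0 → Q i j) : ∀ m i j, (E ^ (m + 1)) i j ≠ 0 → Q i j
  | 0, i, j, h => hE i j (by simpa using h)
  | m + 1, i, j, h => by
    rw [pow_succ, mul_apply] at h
    obtain ⟨p, -, hp⟩ := Finset.exists_ne_zero_of_sum_ne_zero h
    obtain ⟨hip, hpj⟩ := ne_zero_and_ne_zero_of_mul hp
    exact _root_.trans (rel_of_pow_succ_apply_ne_zero hE m i p hip) (hE p j hpj)

theorem pow_card_eq_zero_of_rel [IsStrictOrder ι Q] {E : Matrix ι ι α}
    (hE : ∀ i j, E i j ≠ 0 → Q i j) : E ^ Fintype.card ι = 0 := by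
  classical
  let rank (i : ι) : ℕ := (Finset.univ.filter (Q · i)).card
  have rank_lt {i j : ι} (h : Q i j) : rank i < rank j :=
    Finset.card_lt_card <| (Finset.ssubset_iff_of_subset fun q hq => by
      simp only [Finset.mem_filter, Finset.mem_univ, true_and] at hq ⊢
      exact _root_.trans hq h).2 ⟨i, by simp [h, irrefl i]⟩
  have rank_lt_card (j : ι) : rank j < Fintype.card ι :=
    Finset.card_lt_univ_of_notMem (x := j) (by simp [irrefl j])
  have rank_add_le : ∀ m i j, (E ^ m) i j ≠ 0 → rank i + m ≤ rank j := by
    intro m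
    induction m with
    | zero =>
      intro i j h
      obtain rfl : i = j := by_contra fun hij => h (by simp [one_apply_ne hij])
      simp
    | succ m ih =>
      intro i j h
      rw [pow_succ, mul_apply] at h
      obtain ⟨p, -, hp⟩ := Finset.exists_ne_zero_of_sum_ne_zero h
      obtain ⟨hip, hpj⟩ := ne_zero_and_ne_zero_of_mul hp
      have := rank_lt (hE p j hpj)
      have := ih i p hip
      omega
  ext i j
  by_contra h
  have := rank_add_le _ i j h
  have := rank_lt_card j
  omega

end Matrix

section Factorization

variable {ι α : Type*} [Fintype ι] [Ring α] {P Q : ι → ι → Prop}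

theorem mul_apply_of_not_rel (hcomp : ∀ i p j, P i p → Q p j → P i j) {B K : Matrix ι ι α}
    (hB : B ∈ unipotentPattern P) (hK : K ∈ unipotentPattern Q) {i j : ι} (hij : ¬ P i j) :
    (B * K) i j = K i j := by
  rw [Matrix.mul_apply, Fintype.sum_eq_single i fun p hp => ?_, hB.1, one_mul]
  by_contra h
  obtain ⟨hip, hpj⟩ := ne_zero_and_ne_zero_of_mul h
  have hPip : P i p := (eq_or_rel_of_mem_unipotentPattern hB hip).resolve_left (Ne.symm hp)
  rcases eq_or_rel_of_mem_unipotentPattern hK hpj with rfl | hQpj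
  · exact hij hPip
  · exact hij (hcomp i p j hPip hQpj)

variable [DecidableEq ι]

theorem exists_inverse_mem_unipotentPattern [IsStrictOrder ι Q] {K : Matrix ι ι α}
    (hK : K ∈ unipotentPattern Q) : ∃ K' ∈ unipotentPattern Q, K * K' = 1 ∧ K' * K = 1 := by
  set E := 1 - K
  have hE : ∀ i j, E i j ≠ 0 → Q i j := fun i j h => by
    obtain rfl | hij := eq_or_ne i j
    · simp [E, hK.1] at h
    · refine (eq_or_rel_of_mem_unipotentPattern hK ?_).resolve_left hij
      simpa [E, Matrix.one_apply_ne hij] using h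
  have hnil : E ^ (Fintype.card ι + 1) = 0 := by
    rw [pow_succ, Matrix.pow_card_eq_zero_of_rel hE, zero_mul]
  refine ⟨∑ m ∈ Finset.range (Fintype.card ι + 1), E ^ m,
    mem_unipotentPattern_iff.2 fun i j hij => ?_, ?_, ?_⟩
  · rw [Finset.sum_range_succ', Matrix.add_apply, Matrix.sum_apply,
      Finset.sum_eq_zero fun m _ => ?_, zero_add, pow_zero]
    by_contra h
    exact hij (Matrix.rel_of_pow_succ_apply_ne_zero hE m i j h)
  · rw [← sub_sub_cancel 1 K, mul_neg_geom_sum, hnil, sub_zero]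
  · rw [← sub_sub_cancel 1 K, geom_sum_mul_neg, hnil, sub_zero]

theorem mul_apply_eq_relPart_mul_apply (hcomp : ∀ i p j, P i p → Q p j → P i j) [DecidableRel Q]
    {A K' : Matrix ι ι α} (hA : A ∈ unipotentPattern fun i j => P i j ∨ Q i j)
    (hK' : K' ∈ unipotentPattern Q) {i j : ι} (hij : ¬ P i j) :
    (A * K') i j = (relPart Q A * K') i j := by
  simp only [Matrix.mul_apply]
  refine Finset.sum_congr rfl fun p _ => ?_
  by_cases hpj : K' p j = 0
  · rw [hpj, mul_zero, mul_zero]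
  have hPip : ¬ P i p := fun hPip =>
    hij ((eq_or_rel_of_mem_unipotentPattern hK' hpj).elim (· ▸ hPip) (hcomp i p j hPip))
  congr 1
  by_cases hQip : Q i p
  · simp [relPart, hQip]
  · obtain rfl | hip := eq_or_ne i p
    · simp [relPart, hA.1]
    · simp [relPart, hQip, Matrix.one_apply_ne hip, hA.2 i p hip (not_or.2 ⟨hPip, hQip⟩)]

theorem bijOn_mul_unipotentPattern [Std.Irrefl P] [IsStrictOrder ι Q]
    (hdisj : ∀ i j, P i j → ¬ Q i j) (hcomp : ∀ i p j, P i p → Q p j → P i j) :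
    BijOn (fun BK : Matrix ι ι α × Matrix ι ι α => BK.1 * BK.2)
      (unipotentPattern P ×ˢ unipotentPattern Q) (unipotentPattern fun i j => P i j ∨ Q i j) := by
  classical
  have : Std.Irrefl fun i j => P i j ∨ Q i j := ⟨fun i h => h.elim (irrefl i) (irrefl i)⟩
  refine ⟨?_, ?_, fun A hA => ?_⟩
  · rintro ⟨B, K⟩ ⟨hB, hK⟩
    refine mem_unipotentPattern_iff.2 fun i j hij => ?_
    rw [not_or] at hij
    exact (mul_apply_of_not_rel hcomp hB hK hij.1).trans (mem_unipotentPattern_iff.1 hK i j hij.2)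
  · rintro ⟨B, K⟩ ⟨hB, hK⟩ ⟨B', K'⟩ ⟨hB', hK'⟩ (h : B * K = B' * K')
    dsimp only at hB hK hB' hK'
    have hKK' : K = K' := Matrix.ext fun i j => by
      by_cases hPij : P i j
      · rw [mem_unipotentPattern_iff.1 hK i j (hdisj i j hPij),
          mem_unipotentPattern_iff.1 hK' i j (hdisj i j hPij)]
      · rw [← mul_apply_of_not_rel hcomp hB hK hPij, ← mul_apply_of_not_rel hcomp hB' hK' hPij, h]
    subst hKK'
    obtain ⟨L, -, hKL, -⟩ := exists_inverse_mem_unipotentPattern hK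
    have hBB' : B = B' := by simpa [mul_assoc, hKL] using congrArg (· * L) h
    rw [hBB']
  · obtain ⟨L, hL, hKL, hLK⟩ :=
      exists_inverse_mem_unipotentPattern (relPart_mem_unipotentPattern (S := Q) A)
    have hAL : A * L ∈ unipotentPattern P := mem_unipotentPattern_iff.2 fun i j hij => by
      rw [mul_apply_eq_relPart_mul_apply hcomp hA hL hij, hKL]
    exact ⟨(A * L, relPart Q A), ⟨hAL, relPart_mem_unipotentPattern A⟩, by simp [mul_assoc, hLK]⟩

theorem bijOn_prod_reverse_ofFn_unipotentPattern {l : ℕ} (R : Fin l → ι → ι → Prop)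
    [∀ t, IsStrictOrder ι (R t)] (hdisj : ∀ t s i j, R t i j → R s i j → t = s)
    (hcomp : ∀ t s i p j, t < s → R s i p → R t p j → ∃ r, t < r ∧ R r i j) :
    BijOn (fun K : Fin l → Matrix ι ι α => (List.ofFn K).reverse.prod)
      (univ.pi fun t => unipotentPattern (R t)) (unipotentPattern fun i j => ∃ t, R t i j) := by
  induction l with
  | zero =>
    refine ⟨fun _ _ => ?_, fun K _ K' _ _ => Subsingleton.elim K K', fun A hA => ?_⟩
    · simpa using one_mem_unipotentPattern
    · refine ⟨Fin.elim0, fun t => t.elim0, ?_⟩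
      simp [eq_one_of_mem_unipotentPattern hA fun _ _ ⟨t, _⟩ => t.elim0]
  | succ l ih =>
    let P (i j : ι) : Prop := ∃ t : Fin l, R t.succ i j
    have : Std.Irrefl P := ⟨fun i ⟨_, h⟩ => irrefl i h⟩
    have hstep := bijOn_mul_unipotentPattern (α := α) (P := P) (Q := R 0)
      (fun i j ⟨t, h⟩ h0 => Fin.succ_ne_zero t (hdisj _ _ _ _ h h0))
      (fun i p j ⟨s, hs⟩ hpj => by
        obtain ⟨r, hr, hij⟩ := hcomp 0 s.succ i p j (Fin.succ_pos s) hs hpj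
        obtain ⟨r, rfl⟩ := Fin.exists_succ_eq.2 hr.ne'
        exact ⟨r, hij⟩)
    have htail := ih (fun t => R t.succ)
      (fun t s i j h h' => Fin.succ_injective _ (hdisj _ _ _ _ h h'))
      (fun t s i p j hts hs ht => by
        obtain ⟨r, hr, hij⟩ := hcomp t.succ s.succ i p j (Fin.succ_lt_succ_iff.2 hts) hs ht
        obtain ⟨r, rfl⟩ := Fin.exists_succ_eq.2 (Fin.succ_pos t |>.trans hr).ne'
        exact ⟨r, Fin.succ_lt_succ_iff.1 hr, hij⟩)
    have hsplit : (fun i j => ∃ t, R t i j) = fun i j => P i j ∨ R 0 i j := by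
      ext i j
      simp [P, Fin.exists_fin_succ, or_comm]
    rw [hsplit]
    exact htail.prod_reverse_ofFn_succ hstep

end Factorization

def OnNegRay (z : ℂ) (α : ℝ) : Prop := ∃ r : ℝ, r < 0 ∧ z = r * exp (α * I)

namespace OnNegRay

variable {z w : ℂ} {α β : ℝ}

theorem ne_zero (h : OnNegRay z α) : z ≠ 0 := by
  obtain ⟨r, hr, rfl⟩ := h
  exact mul_ne_zero (ofReal_ne_zero.2 hr.ne) (exp_ne_zero _)

theorem add (hz : OnNegRay z α) (hw : OnNegRay w α) : OnNegRay (z + w) α := by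
  obtain ⟨r, hr, rfl⟩ := hz
  obtain ⟨s, hs, rfl⟩ := hw
  exact ⟨r + s, by linarith, by push_cast; ring⟩

theorem eq_of_abs_sub_lt_pi (hα : OnNegRay z α) (hβ : OnNegRay z β) (h : |α - β| < Real.pi) :
    α = β := by
  obtain ⟨r, hr, rfl⟩ := hα
  obtain ⟨s, -, hrs⟩ := hβ
  have hrot : (r : ℂ) * exp ((α - β : ℝ) * I) = s := by
    rw [show ((α - β : ℝ) : ℂ) * I = α * I - β * I by push_cast; ring, exp_sub, ← mul_div_assoc,
      hrs, mul_div_cancel_right₀ _ (exp_ne_zero _)]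
  have hsin : r * Real.sin (α - β) = 0 := by
    rw [← exp_ofReal_mul_I_im, ← im_ofReal_mul, hrot, ofReal_im]
  rw [mul_eq_zero, or_iff_right hr.ne, Real.sin_eq_zero_iff_of_lt_of_lt (abs_lt.1 h).1
    (abs_lt.1 h).2] at hsin
  linarith

theorem exists_add_mem_Ioo (hz : OnNegRay z α) (hw : OnNegRay w β) (hαβ : α < β)
    (hβα : β - α < Real.pi) : ∃ γ ∈ Ioo α β, OnNegRay (z + w) γ := by
  obtain ⟨r, hr, rfl⟩ := hz
  obtain ⟨s, hs, rfl⟩ := hw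
  have hsin : 0 < Real.sin (β - α) := Real.sin_pos_of_pos_of_lt_pi (by linarith) hβα
  -- `f γ` is the imaginary part of `(z + w) e^{-iγ}`
  let f (γ : ℝ) : ℝ := r * Real.sin (α - γ) + s * Real.sin (β - γ)
  have hf : ContinuousOn f (Icc α β) := by fun_prop
  have hfα : f α < 0 := by simp only [f, sub_self, Real.sin_zero]; nlinarith
  have hfβ : 0 < f β := by
    simp only [f, sub_self, Real.sin_zero, show α - β = -(β - α) by ring, Real.sin_neg]
    nlinarith
  obtain ⟨γ, ⟨hαγ, hγβ⟩, hfγ⟩ := intermediate_value_Ioo hαβ.le hf ⟨hfα, hfβ⟩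
  simp only [f] at hfγ
  set ρ := r * Real.cos (α - γ) + s * Real.cos (β - γ)
  refine ⟨γ, ⟨hαγ, hγβ⟩, ρ, ?_, ?_⟩
  · have hsinα : Real.sin (α - γ) < 0 :=
      Real.sin_neg_of_neg_of_neg_pi_lt (by linarith) (by linarith)
    have key : ρ * Real.sin (α - γ) = -s * Real.sin (β - α) := by
      rw [show β - α = (β - γ) - (α - γ) by ring, Real.sin_sub (β - γ)]
      linear_combination Real.cos (α - γ) * hfγ
    nlinarith
  · have hrot (θ : ℝ) : exp (θ * I) = exp ((θ - γ : ℝ) * I) * exp (γ * I) := by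
      rw [← exp_add]; push_cast; ring_nf
    have hreal : (r : ℂ) * exp ((α - γ : ℝ) * I) + s * exp ((β - γ : ℝ) * I) = ρ := by
      apply Complex.ext
      · rw [add_re, re_ofReal_mul, re_ofReal_mul, exp_ofReal_mul_I_re, exp_ofReal_mul_I_re,
          ofReal_re]
      · rw [add_im, im_ofReal_mul, im_ofReal_mul, exp_ofReal_mul_I_im, exp_ofReal_mul_I_im,
          ofReal_im, hfγ]
    rw [hrot α, hrot β]
    linear_combination exp (γ * I) * hreal

end OnNegRay

theorem isRoot_iff_onNegRay {n : ℕ} {u : Fin n → ℂ} {k : ℕ} {i j : Fin n} {θ : ℝ} :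
    IsRoot u k i j θ ↔ OnNegRay (u i - u j) (((k : ℝ) - 1) * θ) := by
  have hexp : I * ((k : ℂ) - 1) * θ = (((k : ℝ) - 1) * θ : ℝ) * I := by push_cast; ring
  simp only [IsRoot, OnNegRay, hexp, exp_neg, mul_inv_eq_iff_eq_mul₀ (exp_ne_zero _)]

namespace IsRoot

variable {n : ℕ} {u : Fin n → ℂ} {k : ℕ} {i j m : Fin n} {θ φ : ℝ}

theorem ne (h : IsRoot u k i j θ) : i ≠ j := by
  rintro rfl
  exact (isRoot_iff_onNegRay.1 h).ne_zero (sub_self _)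

theorem trans (h₁ : IsRoot u k i j θ) (h₂ : IsRoot u k j m θ) : IsRoot u k i m θ := by
  rw [isRoot_iff_onNegRay, ← sub_add_sub_cancel (u i) (u j) (u m)]
  exact (isRoot_iff_onNegRay.1 h₁).add (isRoot_iff_onNegRay.1 h₂)

theorem eq_of_abs_sub_lt (hc : 0 < (k : ℝ) - 1) (h₁ : IsRoot u k i j θ) (h₂ : IsRoot u k i j φ)
    (h : |θ - φ| < Real.pi / ((k : ℝ) - 1)) : θ = φ := by
  refine mul_left_cancel₀ hc.ne' <| (isRoot_iff_onNegRay.1 h₁).eq_of_abs_sub_lt_pi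
    (isRoot_iff_onNegRay.1 h₂) ?_
  rw [← mul_sub, abs_mul, abs_of_pos hc]
  exact (lt_div_iff₀' hc).1 h

theorem exists_mem_Ioo (hc : 0 < (k : ℝ) - 1) (h₁ : IsRoot u k i j φ) (h₂ : IsRoot u k j m θ)
    (hθφ : θ < φ) (h : φ - θ < Real.pi / ((k : ℝ) - 1)) : ∃ ψ ∈ Ioo θ φ, IsRoot u k i m ψ := by
  obtain ⟨γ, ⟨hθγ, hγφ⟩, hγ⟩ := (isRoot_iff_onNegRay.1 h₂).exists_add_mem_Ioo
    (isRoot_iff_onNegRay.1 h₁) (mul_lt_mul_of_pos_left hθφ hc)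
    (by rw [← mul_sub]; exact (lt_div_iff₀' hc).1 h)
  refine ⟨γ / ((k : ℝ) - 1), ⟨(lt_div_iff₀' hc).2 hθγ, (div_lt_iff₀' hc).2 hγφ⟩, ?_⟩
  rw [isRoot_iff_onNegRay, mul_div_cancel₀ _ hc.ne', ← sub_add_sub_cancel (u i) (u j) (u m),
    add_comm]
  exact hγ

end IsRoot

theorem stokesFactors_product_halfPeriod_general (n k : ℕ) (hk : 2 ≤ k) (u : Fin n → ℂ)
    (θ₀ : ℝ) (l : ℕ) (d : Fin l → ℝ) (hmono : StrictMono d)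
    (hmem : ∀ t, d t ∈ Set.Ico θ₀ (θ₀ + Real.pi / ((k : ℝ) - 1)) ∧ IsAntiStokes u k (d t))
    (hall : ∀ θ ∈ Set.Ico θ₀ (θ₀ + Real.pi / ((k : ℝ) - 1)),
      IsAntiStokes u k θ → ∃ t, d t = θ) :
    (∀ K K' : Fin l → Matrix (Fin n) (Fin n) ℂ,
      (∀ t, StoMem u k (d t) (K t)) → (∀ t, StoMem u k (d t) (K' t)) →
      (List.ofFn K).reverse.prod = (List.ofFn K').reverse.prod → K = K') ∧
    (∀ A : Matrix (Fin n) (Fin n) ℂ,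
      (∃ K : Fin l → Matrix (Fin n) (Fin n) ℂ,
        (∀ t, StoMem u k (d t) (K t)) ∧ (List.ofFn K).reverse.prod = A) ↔
      ((∀ i, A i i = 1) ∧
        ∀ i j : Fin n, i ≠ j → ¬ (∃ t, IsRoot u k i j (d t)) → A i j = 0)) := by
  have hc : 0 < (k : ℝ) - 1 := by
    have : (2 : ℝ) ≤ k := by exact_mod_cast hk
    linarith
  have hwidth (t s : Fin l) : d t - d s < Real.pi / ((k : ℝ) - 1) := by
    linarith [(hmem t).1.2, (hmem s).1.1]
  have : ∀ t, IsStrictOrder (Fin n) fun i j => IsRoot u k i j (d t) := fun _ =>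
    { irrefl := fun _ h => h.ne rfl, trans := fun _ _ _ => IsRoot.trans }
  have hbij := bijOn_prod_reverse_ofFn_unipotentPattern (α := ℂ)
    (fun t i j => IsRoot u k i j (d t))
    (fun t s _ _ ht hs => hmono.injective <|
      ht.eq_of_abs_sub_lt hc hs (abs_sub_lt_iff.2 ⟨hwidth t s, hwidth s t⟩))
    (fun t s i _ j hts hs ht => by
      obtain ⟨ψ, ⟨htψ, hψs⟩, hψ⟩ := hs.exists_mem_Ioo hc ht (hmono hts) (hwidth s t)
      obtain ⟨r, rfl⟩ :=
        hall ψ ⟨(hmem t).1.1.trans htψ.le, hψs.trans (hmem s).1.2⟩ ⟨i, j, hψ.ne, hψ⟩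
      exact ⟨r, hmono.lt_iff_lt.1 htψ, hψ⟩)
  refine ⟨fun K K' hK hK' h => hbij.injOn (mem_univ_pi.2 hK) (mem_univ_pi.2 hK') h,
    fun A => ⟨?_, fun hA => ?_⟩⟩
  · rintro ⟨K, hK, rfl⟩
    exact hbij.mapsTo (mem_univ_pi.2 hK)
  · obtain ⟨K, hK, rfl⟩ := hbij.surjOn hA
    exact ⟨K, mem_univ_pi.1 hK, rfl⟩

/-- **Unique factorisation into Stokes factors over a half-period.** Let `d₁ < ⋯ < d_l` be
the anti-Stokes directions in the half-period `[θ₀, θ₀ + π/(k−1))`. Then the (reverse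
ordered) product map `(K₁, …, K_l) ↦ K_l ⋯ K₁` on `Sto(d₁) × ⋯ × Sto(d_l)` is injective,
and its image is exactly the set of matrices `A` with `A_{ii} = 1` and `A_{ij} = 0`
whenever `i ≠ j` and not `i ≺ j`, where `i ≺ j` iff `(i,j) ∈ Roots(d_t)` for some `t` —
that is, `P·U₊·P⁻¹` for the permutation matrix `P` of the order `≺`. -/
theorem stokesFactors_product_halfPeriod (n k : ℕ) (hk : 2 ≤ k) (u : Fin n → ℂ)
    (hu : Function.Injective u) (θ₀ : ℝ) (l : ℕ) (d : Fin l → ℝ) (hmono : StrictMono d)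
    (hmem : ∀ t, d t ∈ Set.Ico θ₀ (θ₀ + Real.pi / ((k : ℝ) - 1)) ∧ IsAntiStokes u k (d t))
    (hall : ∀ θ ∈ Set.Ico θ₀ (θ₀ + Real.pi / ((k : ℝ) - 1)),
      IsAntiStokes u k θ → ∃ t, d t = θ) :
    (∀ K K' : Fin l → Matrix (Fin n) (Fin n) ℂ,
      (∀ t, StoMem u k (d t) (K t)) → (∀ t, StoMem u k (d t) (K' t)) →
      (List.ofFn K).reverse.prod = (List.ofFn K').reverse.prod → K = K') ∧
    (∀ A : Matrix (Fin n) (Fin n) ℂ,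
      (∃ K : Fin l → Matrix (Fin n) (Fin n) ℂ,
        (∀ t, StoMem u k (d t) (K t)) ∧ (List.ofFn K).reverse.prod = A) ↔
      ((∀ i, A i i = 1) ∧
        ∀ i j : Fin n, i ≠ j → ¬ (∃ t, IsRoot u k i j (d t)) → A i j = 0)) :=
  stokesFactors_product_halfPeriod_general n k hk u θ₀ l d hmono hmem hall
end

section
/- Fix θ₀ ∈ ℝ, let l be the number of anti-Stokes directions in the half-period [θ₀, θ₀ + π/(k−1)), and label the anti-Stokes directions in [θ₀, θ₀ + 2π) in increasing order as d₁ < d₂ < ⋯ < d_r, so r = (2k−2)·l. Let P be the permutation matrix of the total order determined by the first half-period (d₁, …, d_l). Then the map ∏_{t=1}^{r} Sto(d_t) → (U₊ × U₋)^{k−1}, (K₁, …, K_r) ↦ (S₁, …, S_{2k−2}) with S_i := P⁻¹·K_{il}·K_{il−1} ⋯ K_{(i−1)l+1}·P, is well defined (S_i is upper-triangular unipotent for odd i and lower-triangular unipotent for even i) and is a bijection. -/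
/-- An `n×n` complex matrix is upper-triangular unipotent if its diagonal entries are `1`
and its entries below the diagonal vanish. -/
def IsUpperUnipotent {n : ℕ} (A : Matrix (Fin n) (Fin n) ℂ) : Prop :=
  (∀ i, A i i = 1) ∧ ∀ i j : Fin n, j < i → A i j = 0

/-- An `n×n` complex matrix is lower-triangular unipotent if its diagonal entries are `1`
and its entries above the diagonal vanish. -/
def IsLowerUnipotent {n : ℕ} (A : Matrix (Fin n) (Fin n) ℂ) : Prop :=
  (∀ i, A i i = 1) ∧ ∀ i j : Fin n, i < j → A i j = 0

/-!
Shifting a direction by `π/(k-1)` multiplies `exp(-√-1 (k-1) θ)` by `-1`, so it turns the roots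
`(i, j)` of the direction into the roots `(j, i)`. Hence the anti-Stokes directions are
`π/(k-1)`-periodic, `d_{ml+s} = d_s + m π/(k-1)`, and the root sets of the `m`-th half-period are
those of the first one, reversed when `m` is odd. Within one half-period a pair is a root of at
most one direction, so these root sets partition the pairs `i ≺ j` (resp. `j ≺ i`).

For any such partition the ordered product of Stokes factors is a bijection onto the unipotent
group of the order: the `(i, j)` entry of the product is the `(i, j)` entry of the one factor
that may carry it, plus a polynomial in entries whose interval lies strictly inside `[i, j]`.
This triangular system is solved by well-founded recursion. Conjugation by `P` carries the
unipotent group of `≺` onto `U₊` and that of the reversed order onto `U₋`.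
-/

open Function Set

theorem WellFounded.bijective_of_sub_apply_eq {ι G : Type*} [AddCommGroup G]
    {r : ι → ι → Prop} (hr : WellFounded r) {F : (ι → G) → ι → G}
    (hF : ∀ e e' x, (∀ y, r y x → e y = e' y) → F e x - e x = F e' x - e' x) :
    Bijective F := by
  classical
  refine ⟨fun e e' he => funext fun x => ?_, fun N => ?_⟩
  · induction x using hr.induction with
    | _ x ih => simpa [congrFun he x] using hF e e' x ih
  · let below (x : ι) (e : (y : ι) → r y x → G) (y : ι) : G := if h : r y x then e y h else 0
    let e : ι → G := hr.fix fun x e => N x - (F (below x e) x - below x e x)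
    refine ⟨e, funext fun x => ?_⟩
    have hx : e x = N x - (F (below x fun y _ => e y) x - below x (fun y _ => e y) x) :=
      hr.fix_eq _ x
    rwa [hF _ e x fun y hy => dif_pos hy, eq_sub_iff_add_eq, add_sub_cancel] at hx

section Unipotent

variable {τ A : Type*} [Ring A]

def UnipotentWrt [DecidableEq τ] (R : τ → τ → Prop) (N : Matrix τ τ A) : Prop :=
  (∀ i, N i i = 1) ∧ ∀ i j, i ≠ j → ¬ R i j → N i j = 0

namespace UnipotentWrt

variable [DecidableEq τ] {R R' : τ → τ → Prop} {M N : Matrix τ τ A}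

theorem mono (hN : UnipotentWrt R N) (hRR' : ∀ i j, R i j → R' i j) : UnipotentWrt R' N :=
  ⟨hN.1, fun i j hij h => hN.2 i j hij (mt (hRR' i j) h)⟩

theorem sub_one_apply (hN : UnipotentWrt R N) {i j : τ} (h : ¬ R i j) : (N - 1) i j = 0 := by
  rcases eq_or_ne i j with rfl | hij
  · simp [hN.1]
  · simp [hN.2 i j hij h, Matrix.one_apply_ne hij]

theorem of_sub_one_apply (hR : ∀ i, ¬ R i i) (h : ∀ i j, ¬ R i j → (N - 1) i j = 0) :
    UnipotentWrt R N := by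
  refine ⟨fun i => ?_, fun i j hij hR' => ?_⟩
  · simpa [sub_eq_zero] using h i i (hR i)
  · simpa [Matrix.one_apply_ne hij] using h i j hR'

theorem ext (hM : UnipotentWrt R M) (hN : UnipotentWrt R N)
    (h : ∀ i j, R i j → M i j = N i j) : M = N := by
  ext i j
  by_cases hij : R i j
  · exact h i j hij
  · rcases eq_or_ne i j with rfl | hne
    · rw [hM.1, hN.1]
    · rw [hM.2 i j hne hij, hN.2 i j hne hij]

theorem submatrix_iff {τ' : Type*} [DecidableEq τ'] (e : τ ≃ τ') {N : Matrix τ' τ' A} :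
    UnipotentWrt R (N.submatrix e e) ↔ UnipotentWrt (R on e.symm) N := by
  constructor
  · rintro ⟨hdiag, hoff⟩
    refine ⟨fun i => by simpa using hdiag (e.symm i), fun i j hij h => ?_⟩
    simpa using hoff (e.symm i) (e.symm j) (by simpa using hij) h
  · rintro ⟨hdiag, hoff⟩
    refine ⟨fun i => hdiag (e i), fun i j hij h => hoff (e i) (e j) (by simpa using hij) ?_⟩
    simpa [onFun] using h

end UnipotentWrt

theorem isUpperUnipotent_iff {n : ℕ} {M : Matrix (Fin n) (Fin n) ℂ} :
    IsUpperUnipotent M ↔ UnipotentWrt (· < ·) M :=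
  ⟨fun h => ⟨h.1, fun i j hij hlt => h.2 i j (lt_of_le_of_ne (not_lt.1 hlt) hij.symm)⟩,
    fun h => ⟨h.1, fun i j hji => h.2 i j hji.ne' hji.not_gt⟩⟩

theorem isLowerUnipotent_iff {n : ℕ} {M : Matrix (Fin n) (Fin n) ℂ} :
    IsLowerUnipotent M ↔ UnipotentWrt (· > ·) M :=
  ⟨fun h => ⟨h.1, fun i j hij hlt => h.2 i j (lt_of_le_of_ne (not_lt.1 hlt) hij)⟩,
    fun h => ⟨h.1, fun i j hij => h.2 i j hij.ne hij.not_gt⟩⟩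

variable {α : Type*} [LinearOrder α]

variable (A) in
def unipotentSubmonoid [Fintype τ] [DecidableEq τ] (ρ : τ → α) : Submonoid (Matrix τ τ A) where
  carrier := {N | UnipotentWrt ((· < ·) on ρ) N}
  one_mem' := ⟨fun i => Matrix.one_apply_eq i, fun _ _ hij _ => Matrix.one_apply_ne hij⟩
  mul_mem' {M N} hM hN := by
    refine UnipotentWrt.of_sub_one_apply (fun i => lt_irrefl (ρ i)) fun i j hij => ?_
    have hprod : ((M - 1) * (N - 1)) i j = 0 := by
      refine (Matrix.mul_apply ..).trans (Finset.sum_eq_zero fun c _ => ?_)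
      by_cases hic : ρ i < ρ c
      · rw [hN.sub_one_apply (fun hcj : ρ c < ρ j => hij (hic.trans hcj)), mul_zero]
      · rw [hM.sub_one_apply hic, zero_mul]
    have : M * N - 1 = (M - 1) * (N - 1) + (M - 1) + (N - 1) := by noncomm_ring
    rw [this, Matrix.add_apply, Matrix.add_apply, hprod, hM.sub_one_apply hij,
      hN.sub_one_apply hij, add_zero, add_zero]

end Unipotent

section Factorization

variable {τ A α : Type*} [Ring A] [LinearOrder α] (ρ : τ → α)

/-- `boxKey ρ y < boxKey ρ x` says that the `ρ`-interval spanned by `y` lies strictly inside that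
spanned by `x`. -/
def boxKey (p : τ × τ) : αᵒᵈ × α := (OrderDual.toDual (ρ p.1), ρ p.2)

variable {ρ} in
theorem boxKey_lt_left {i c j : τ} (h : ρ c < ρ j) : boxKey ρ (i, c) < boxKey ρ (i, j) :=
  Prod.mk_lt_mk_of_le_of_lt le_rfl h

variable {ρ} in
theorem boxKey_lt_right {i c j : τ} (h : ρ i < ρ c) : boxKey ρ (c, j) < boxKey ρ (i, j) :=
  Prod.mk_lt_mk_of_lt_of_le h le_rfl

variable [DecidableEq τ]

open Classical in
noncomputable def stokesFactor (R : τ → τ → Prop) (e : τ × τ → A) : Matrix τ τ A :=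
  Matrix.of fun i j => if i = j then 1 else if R i j then e (i, j) else 0

theorem unipotentWrt_stokesFactor (R : τ → τ → Prop) (e : τ × τ → A) :
    UnipotentWrt R (stokesFactor R e) :=
  ⟨fun i => by simp [stokesFactor], fun i j hij hR => by simp [stokesFactor, hij, hR]⟩

variable {l : ℕ} {R : Fin l → τ → τ → Prop}

theorem sum_stokesFactor_apply (hR : ∀ i j, (∃ t, R t i j) ↔ ρ i < ρ j)
    (huniq : ∀ t t' i j, R t i j → R t' i j → t = t') (e : τ × τ → A) {i j : τ}
    (hij : ρ i < ρ j) : ∑ t, stokesFactor (R t) e i j = e (i, j) := by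
  obtain ⟨t, ht⟩ := (hR i j).2 hij
  rw [Finset.sum_eq_single t (fun s _ hst => ?_) (by simp)]
  · simp [stokesFactor, ne_of_apply_ne ρ hij.ne, ht]
  · have hs : ¬ R s i j := fun h => hst (huniq s t i j h ht)
    simp [stokesFactor, ne_of_apply_ne ρ hij.ne, hs]

theorem eq_stokesFactor_sum_sub_one (huniq : ∀ t t' i j, R t i j → R t' i j → t = t')
    {K : Fin l → Matrix τ τ A} (hK : ∀ t, UnipotentWrt (R t) (K t)) (t : Fin l) :
    K t = stokesFactor (R t) fun x => ∑ s, (K s - 1) x.1 x.2 := by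
  ext i j
  by_cases hij : i = j
  · simp [stokesFactor, hij, (hK t).1]
  by_cases ht : R t i j
  · simp only [stokesFactor, Matrix.of_apply, if_neg hij, if_pos ht]
    rw [Finset.sum_eq_single t (fun s _ hst => (hK s).sub_one_apply
      fun hs => hst (huniq s t i j hs ht)) (by simp)]
    simp [Matrix.one_apply_ne hij]
  · simp [stokesFactor, hij, ht, (hK t).2 i j hij ht]

variable [Fintype τ]

theorem list_prod_apply_sub_sum_eq {L L' : List (Matrix τ τ A)} (hlen : L.length = L'.length)
    (hL : ∀ M ∈ L, M ∈ unipotentSubmonoid A ρ) (hL' : ∀ M ∈ L', M ∈ unipotentSubmonoid A ρ)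
    {i j : τ} (hij : ρ i < ρ j)
    (h : ∀ a b, boxKey ρ (a, b) < boxKey ρ (i, j) → L.map (· a b) = L'.map (· a b)) :
    L.prod i j - (L.map (· i j)).sum = L'.prod i j - (L'.map (· i j)).sum := by
  induction L generalizing L' i j with
  | nil => rw [List.eq_nil_of_length_eq_zero hlen.symm]
  | cons M L ih =>
    obtain ⟨M', L', rfl⟩ := List.exists_cons_of_length_eq_add_one hlen.symm
    simp only [List.length_cons, add_left_inj, List.forall_mem_cons] at hlen hL hL'
    have hsplit (a b) (hab : boxKey ρ (a, b) < boxKey ρ (i, j)) :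
        M a b = M' a b ∧ L.map (· a b) = L'.map (· a b) := by simpa using h a b hab
    have htail (a b) (hab : boxKey ρ (a, b) < boxKey ρ (i, j)) := (hsplit a b hab).2
    have hprod_eq (c) (hic : ρ i < ρ c) (hcj : ρ c < ρ j) : L.prod c j = L'.prod c j := by
      have hc := ih hlen hL.2 hL'.2 hcj fun a b hab => htail a b (hab.trans (boxKey_lt_right hic))
      rwa [htail c j (boxKey_lt_right hic), sub_left_inj] at hc
    have hmid : ((M - 1) * (L.prod - 1)) i j = ((M' - 1) * (L'.prod - 1)) i j := by
      simp only [Matrix.mul_apply]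
      refine Finset.sum_congr rfl fun c _ => ?_
      by_cases hic : ρ i < ρ c
      · by_cases hcj : ρ c < ρ j
        · simp only [Matrix.sub_apply, (hsplit i c (boxKey_lt_left hcj)).1, hprod_eq c hic hcj]
        · rw [(Submonoid.list_prod_mem _ hL.2).sub_one_apply hcj,
            (Submonoid.list_prod_mem _ hL'.2).sub_one_apply hcj, mul_zero, mul_zero]
      · rw [hL.1.sub_one_apply hic, hL'.1.sub_one_apply hic, zero_mul, zero_mul]
    have hexpand (X Y : Matrix τ τ A) (s : A) :
        (X * Y) i j - (X i j + s) = ((X - 1) * (Y - 1)) i j + (Y i j - s) := by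
      have : X * Y = (X - 1) * (Y - 1) + X + Y - 1 := by noncomm_ring
      rw [this]
      simp only [Matrix.sub_apply, Matrix.add_apply, Matrix.one_apply_ne (ne_of_apply_ne ρ hij.ne)]
      abel
    simp only [List.prod_cons, List.map_cons, List.sum_cons]
    rw [hexpand, hexpand, hmid, ih hlen hL.2 hL'.2 hij htail]

variable (R) in
/-- The entries of `∏ₜ stokesFactor (R t) e` on the pairs with `ρ i < ρ j`; elsewhere it is the
identity, which makes it a self-map of `τ × τ → A` to which
`WellFounded.bijective_of_sub_apply_eq` applies. -/
noncomputable def productCoords (e : τ × τ → A) (x : τ × τ) : A :=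
  if ρ x.1 < ρ x.2 then (List.ofFn fun t => stokesFactor (R t) e).reverse.prod x.1 x.2 else e x

theorem bijective_productCoords (hR : ∀ i j, (∃ t, R t i j) ↔ ρ i < ρ j)
    (huniq : ∀ t t' i j, R t i j → R t' i j → t = t') :
    Bijective (productCoords (A := A) ρ R) := by
  have hwf : WellFounded ((· < ·) on boxKey ρ) :=
    Set.wellFoundedOn_range.mp (Set.finite_range _).wellFoundedOn
  refine hwf.bijective_of_sub_apply_eq fun e e' ⟨i, j⟩ hee' => ?_
  unfold productCoords
  split_ifs with hij
  · have hmem (e : τ × τ → A) : ∀ M ∈ (List.ofFn fun t => stokesFactor (R t) e).reverse,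
        M ∈ unipotentSubmonoid A ρ := by
      simp only [List.mem_reverse, List.mem_ofFn, forall_exists_index, forall_apply_eq_imp_iff]
      exact fun t => (unipotentWrt_stokesFactor _ e).mono fun a b h => (hR a b).1 ⟨t, h⟩
    have h := list_prod_apply_sub_sum_eq ρ (by simp) (hmem e) (hmem e') hij fun a b hab => by
      simp only [List.map_reverse, List.map_ofFn, List.reverse_inj]
      congr 1
      funext t
      simp [stokesFactor, hee' (a, b) hab]
    simpa only [List.map_reverse, List.sum_reverse, List.map_ofFn, List.sum_ofFn, comp_def,
      sum_stokesFactor_apply ρ hR huniq _ hij] using h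
  · simp

theorem bijOn_ofFn_reverse_prod (hR : ∀ i j, (∃ t, R t i j) ↔ ρ i < ρ j)
    (huniq : ∀ t t' i j, R t i j → R t' i j → t = t') :
    BijOn (fun K : Fin l → Matrix τ τ A => (List.ofFn K).reverse.prod)
      {K | ∀ t, UnipotentWrt (R t) (K t)} (unipotentSubmonoid A ρ) := by
  have hmaps : MapsTo (fun K : Fin l → Matrix τ τ A => (List.ofFn K).reverse.prod)
      {K | ∀ t, UnipotentWrt (R t) (K t)} (unipotentSubmonoid A ρ) := fun K hK => by
    refine Submonoid.list_prod_mem _ fun M hM => ?_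
    obtain ⟨t, rfl⟩ := List.mem_ofFn.mp (List.mem_reverse.mp hM)
    exact (hK t).mono fun a b h => (hR a b).1 ⟨t, h⟩
  have hbij := bijective_productCoords (A := A) ρ hR huniq
  refine ⟨hmaps, fun K hK K' hK' hKK' => ?_, fun N hN => ?_⟩
  · let c (K : Fin l → Matrix τ τ A) (x : τ × τ) : A := ∑ s, (K s - 1) x.1 x.2
    have hcoords (K : Fin l → Matrix τ τ A) (hK : ∀ t, UnipotentWrt (R t) (K t)) :
        productCoords ρ R (c K) =
          fun x => if ρ x.1 < ρ x.2 then (List.ofFn K).reverse.prod x.1 x.2 else 0 := by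
      funext ⟨i, j⟩
      simp only [productCoords, c, ← eq_stokesFactor_sum_sub_one huniq hK]
      split_ifs with hij
      · rfl
      · exact Finset.sum_eq_zero fun s _ =>
          (hK s).sub_one_apply fun h => hij ((hR i j).1 ⟨s, h⟩)
    have hprod : (List.ofFn K).reverse.prod = (List.ofFn K').reverse.prod := hKK'
    have hc : c K = c K' := hbij.1 (by rw [hcoords K hK, hcoords K' hK', hprod])
    funext t
    rw [eq_stokesFactor_sum_sub_one huniq hK, eq_stokesFactor_sum_sub_one huniq hK']
    exact congrArg _ hc
  · obtain ⟨e, he⟩ := hbij.2 fun x => N x.1 x.2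
    refine ⟨fun t => stokesFactor (R t) e, fun t => unipotentWrt_stokesFactor _ e,
      UnipotentWrt.ext (hmaps fun t => unipotentWrt_stokesFactor _ e) hN fun i j hij => ?_⟩
    simpa [productCoords, show ρ i < ρ j from hij] using congrFun he (i, j)

end Factorization

section Roots

open Complex Real

variable {n k : ℕ} {u : Fin n → ℂ} {i j : Fin n} {θ θ' : ℝ}

theorem not_isRoot_self : ¬ IsRoot u k i i θ := by
  rintro ⟨r, hr, h⟩
  rw [sub_self, zero_mul, eq_comm, ofReal_eq_zero] at h
  exact hr.ne h

theorem isRoot_add_pi_div (hk : k ≠ 1) :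
    IsRoot u k i j (θ + π / (k - 1)) ↔ IsRoot u k j i θ := by
  have hk' : (k : ℂ) - 1 ≠ 0 := sub_ne_zero.mpr (by exact_mod_cast hk)
  have hshift : (u i - u j) * cexp (-(I * ((k : ℂ) - 1) * ((θ + π / (k - 1) : ℝ) : ℂ))) =
      (u j - u i) * cexp (-(I * ((k : ℂ) - 1) * (θ : ℂ))) := by
    have harg : -(I * ((k : ℂ) - 1) * ((θ + π / (k - 1) : ℝ) : ℂ)) =
        -(I * ((k : ℂ) - 1) * θ) - π * I := by
      push_cast
      field_simp
      ring
    rw [harg, Complex.exp_sub, exp_pi_mul_I]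
    ring
  simp only [IsRoot, hshift]

theorem isRoot_add_nat_mul_pi_div (hk : k ≠ 1) (m : ℕ) :
    IsRoot u k i j (θ + m * (π / (k - 1))) ↔
      if Even m then IsRoot u k i j θ else IsRoot u k j i θ := by
  induction m generalizing i j with
  | zero => simp
  | succ m ih =>
    rw [Nat.cast_succ, add_one_mul, ← add_assoc, isRoot_add_pi_div hk, ih]
    by_cases hm : Even m <;> simp [hm, Nat.even_add_one]

theorem isAntiStokes_periodic (hk : k ≠ 1) : Periodic (IsAntiStokes u k) (π / (k - 1)) :=
  fun _ => propext ⟨fun ⟨i, j, hij, h⟩ => ⟨j, i, hij.symm, (isRoot_add_pi_div hk).1 h⟩,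
    fun ⟨i, j, hij, h⟩ => ⟨j, i, hij.symm, (isRoot_add_pi_div hk).2 h⟩⟩

theorem IsRoot.eq_of_abs_sub_lt_s15 (hk : 1 < k) (h : IsRoot u k i j θ) (h' : IsRoot u k i j θ')
    (hθ : |θ - θ'| < π / (k - 1)) : θ = θ' := by
  obtain ⟨r, hr, he⟩ := h
  obtain ⟨r', hr', he'⟩ := h'
  have hω : (0 : ℝ) < k - 1 := sub_pos.mpr (by exact_mod_cast hk)
  have hexp (x : ℝ) : cexp (-(I * ((k : ℂ) - 1) * x)) = cexp (((-((k - 1) * x) : ℝ)) * I) := by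
    push_cast
    ring_nf
  -- both roots have modulus `‖uᵢ - uⱼ‖`, so `r = r'`
  have hrr' : r = r' := by
    have hn := congrArg norm he
    have hn' := congrArg norm he'
    rw [norm_mul, hexp, norm_exp_ofReal_mul_I, mul_one, norm_real, Real.norm_eq_abs,
      abs_of_neg hr] at hn
    rw [norm_mul, hexp, norm_exp_ofReal_mul_I, mul_one, norm_real, Real.norm_eq_abs,
      abs_of_neg hr'] at hn'
    linarith
  have hc : u i - u j ≠ 0 := fun hc => by
    rw [hc, zero_mul, eq_comm, ofReal_eq_zero] at he
    exact hr.ne he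
  obtain ⟨m, hm⟩ := exp_eq_exp_iff_exists_int.mp (mul_left_cancel₀ hc (he.trans (hrr' ▸ he'.symm)))
  have him : (k - 1) * (θ' - θ) = 2 * π * m := by
    have := congrArg Complex.im hm
    simp at this
    linear_combination this
  have hm0 : m = 0 := by
    by_contra hm0
    have h1 : (1 : ℝ) ≤ |(m : ℝ)| := by exact_mod_cast Int.one_le_abs hm0
    have h2 := congrArg abs him
    rw [abs_mul, abs_mul, abs_of_pos hω, abs_of_pos two_pi_pos, abs_sub_comm] at h2
    rw [lt_div_iff₀' hω] at hθ
    nlinarith [pi_pos]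
  rw [hm0, Int.cast_zero, mul_zero] at him
  linarith [(mul_eq_zero.mp him).resolve_left hω.ne']

end Roots

theorem strictMono_add_mul_finProdFinEquiv {p l : ℕ} {b : Fin l → ℝ} (hb : StrictMono b)
    {θ₀ h : ℝ} (hbI : ∀ s, b s ∈ Ico θ₀ (θ₀ + h)) :
    StrictMono fun t : Fin (p * l) =>
      b (finProdFinEquiv.symm t).2 + (finProdFinEquiv.symm t).1 * h := by
  intro t t' htt'
  obtain ⟨⟨m, s⟩, rfl⟩ := finProdFinEquiv.surjective t
  obtain ⟨⟨m', s'⟩, rfl⟩ := finProdFinEquiv.surjective t'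
  simp only [Fin.lt_def, finProdFinEquiv_apply_val] at htt'
  simp only [Equiv.symm_apply_apply]
  obtain ⟨hs₀, hs⟩ := hbI s
  obtain ⟨hs', -⟩ := hbI s'
  rcases lt_trichotomy (m : ℕ) m' with hmm | hmm | hmm
  · have : (m : ℝ) + 1 ≤ m' := by exact_mod_cast hmm
    nlinarith [show 0 < h by linarith]
  · have hss : s < s' := by rw [Fin.lt_def]; rw [hmm] at htt'; omega
    rw [Fin.ext hmm]
    linarith [hb hss]
  · have := Nat.mul_le_mul_left l hmm
    rw [Nat.mul_succ] at this
    omega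

theorem exists_eq_add_mul_of_periodic {P : ℝ → Prop} {h : ℝ} (hh : 0 < h) (hP : Periodic P h)
    {θ₀ : ℝ} {p l : ℕ} (hp : 0 < p) (hl : {θ ∈ Ico θ₀ (θ₀ + h) | P θ}.ncard = l)
    {d : Fin (p * l) → ℝ} (hd : StrictMono d)
    (hrange : range d = {θ ∈ Ico θ₀ (θ₀ + p * h) | P θ}) :
    ∃ b : Fin l → ℝ, StrictMono b ∧ (∀ s, b s ∈ Ico θ₀ (θ₀ + h)) ∧
      ∀ m s, d (finProdFinEquiv (m, s)) = b s + m * h := by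
  set B := {θ ∈ Ico θ₀ (θ₀ + h) | P θ}
  have hph : h ≤ p * h := le_mul_of_one_le_left hh.le (by exact_mod_cast hp)
  have hB : B.Finite := (finite_range d).subset fun θ ⟨⟨h1, h2⟩, hθ⟩ =>
    hrange ▸ ⟨⟨h1, h2.trans_le (by linarith)⟩, hθ⟩
  let b := hB.toFinset.orderEmbOfFin (by rw [← ncard_eq_toFinset_card B hB, hl])
  have hb (s : Fin l) : b s ∈ B := hB.mem_toFinset.mp (Finset.orderEmbOfFin_mem _ _ s)
  -- the periodic extension `e` of `b` is strictly increasing with the same range as `d`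
  let e (t : Fin (p * l)) : ℝ := b (finProdFinEquiv.symm t).2 + (finProdFinEquiv.symm t).1 * h
  have he_apply (m s) : e (finProdFinEquiv (m, s)) = b s + m * h := by
    simp only [e, Equiv.symm_apply_apply]
  have he_mono : StrictMono e := strictMono_add_mul_finProdFinEquiv b.strictMono fun s => (hb s).1
  have he_range : range e ⊆ range d := by
    rintro _ ⟨t, rfl⟩
    obtain ⟨⟨h1, h2⟩, hPt⟩ := hb (finProdFinEquiv.symm t).2
    have hm : ((finProdFinEquiv.symm t).1 : ℝ) + 1 ≤ p := by
      exact_mod_cast (finProdFinEquiv.symm t).1.isLt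
    rw [hrange]
    refine ⟨⟨le_add_of_le_of_nonneg h1 (by positivity), by nlinarith⟩, ?_⟩
    rwa [hP.nat_mul]
  have hed : e = d := (he_mono.range_inj hd).mp <| eq_of_subset_of_ncard_le he_range
    (by rw [ncard_range_of_injective hd.injective, ncard_range_of_injective he_mono.injective])
  exact ⟨b, b.strictMono, fun s => (hb s).1, fun m s => hed ▸ he_apply m s⟩

theorem Equiv.Perm.inv_permMatrix_mul_mul {τ A : Type*} [Fintype τ] [DecidableEq τ] [CommRing A]
    (σ : Equiv.Perm τ) (N : Matrix τ τ A) :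
    (σ.permMatrix A)⁻¹ * N * σ.permMatrix A = Matrix.reindex σ σ N := by
  have hinv : (σ.permMatrix A)⁻¹ = σ⁻¹.permMatrix A := Matrix.inv_eq_right_inv <| by
    rw [← Matrix.permMatrix_mul, inv_mul_cancel, Matrix.permMatrix_one]
  rw [hinv, PEquiv.toMatrix_toPEquiv_mul, PEquiv.mul_toMatrix_toPEquiv]
  rfl

theorem bijOn_inv_permMatrix_mul_mul {τ A : Type*} [Fintype τ] [DecidableEq τ] [CommRing A]
    (σ : Equiv.Perm τ) (R : τ → τ → Prop) :
    BijOn (fun N : Matrix τ τ A => (σ.permMatrix A)⁻¹ * N * σ.permMatrix A)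
      {N | UnipotentWrt (R on σ) N} {M | UnipotentWrt R M} := by
  simp_rw [Equiv.Perm.inv_permMatrix_mul_mul]
  exact (Matrix.reindex σ σ).bijOn fun N => by
    simpa using UnipotentWrt.submatrix_iff (R := R) σ.symm (N := N)

theorem List.take_drop_ofFn_finProdFinEquiv {α : Type*} {p l : ℕ} (K : Fin (p * l) → α)
    (m : Fin p) :
    ((List.ofFn K).drop (m * l)).take l = List.ofFn fun s => K (finProdFinEquiv (m, s)) := by
  have hm : (m + 1) * l ≤ p * l := Nat.mul_le_mul_right l m.isLt
  apply List.ext_getElem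
  · simp only [List.length_take, List.length_drop, List.length_ofFn]
    rw [add_one_mul] at hm
    omega
  · intro s _ _
    simp only [List.getElem_take, List.getElem_drop, List.getElem_ofFn]
    congr 1
    ext
    simp [finProdFinEquiv_apply_val, Nat.add_comm, Nat.mul_comm]

open Real in
theorem bijOn_stokesMatrix_of_halfPeriod {n k l : ℕ} {u : Fin n → ℂ} (hk : 1 < k) {θ₀ : ℝ}
    {b : Fin l → ℝ} (hb : ∀ s, b s ∈ Ico θ₀ (θ₀ + π / (k - 1))) (hb_inj : Injective b)
    {σ : Equiv.Perm (Fin n)} (hσ : ∀ i j, (∃ s, IsRoot u k i j (b s)) ↔ σ i < σ j) (m : ℕ) :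
    BijOn (fun K : Fin l → Matrix (Fin n) (Fin n) ℂ =>
        (σ.permMatrix ℂ)⁻¹ * (List.ofFn K).reverse.prod * σ.permMatrix ℂ)
      {K | ∀ s, StoMem u k (b s + m * (π / (k - 1))) (K s)}
      {N | (Odd (m + 1) → IsUpperUnipotent N) ∧ (Even (m + 1) → IsLowerUnipotent N)} := by
  have huniq (s s' i j) (h : IsRoot u k i j (b s)) (h' : IsRoot u k i j (b s')) : s = s' := by
    refine hb_inj (h.eq_of_abs_sub_lt_s15 hk h' (abs_sub_lt_iff.mpr ⟨?_, ?_⟩)) <;>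
      linarith [(hb s).1, (hb s).2, (hb s').1, (hb s').2]
  have hsto (s K) : StoMem u k (b s + m * (π / (k - 1))) K ↔ UnipotentWrt
      (fun i j => if Even m then IsRoot u k i j (b s) else IsRoot u k j i (b s)) K := by
    simp only [StoMem, UnipotentWrt, isRoot_add_nat_mul_pi_div (show k ≠ 1 by omega)]
  simp only [hsto]
  rcases Nat.even_or_odd m with hm | hm
  · simp only [hm, if_true, Nat.even_add_one, not_true, Nat.odd_add_one, Nat.not_odd_iff_even,
      isUpperUnipotent_iff, true_implies, false_implies, and_true]
    exact (bijOn_inv_permMatrix_mul_mul σ (· < ·)).comp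
      (bijOn_ofFn_reverse_prod (A := ℂ) σ hσ huniq)
  · simp only [Nat.not_even_iff_odd.mpr hm, if_false, Nat.even_add_one, Nat.odd_add_one,
      isLowerUnipotent_iff, not_false_eq_true, true_implies, false_implies, true_and, hm, not_true]
    -- `(· > ·) on σ` is `(· < ·) on (toDual ∘ σ)`
    exact (bijOn_inv_permMatrix_mul_mul σ (· > ·)).comp
      (bijOn_ofFn_reverse_prod (A := ℂ) (R := fun s i j => IsRoot u k j i (b s))
        (fun i => OrderDual.toDual (σ i)) (fun i j => hσ j i) fun s s' i j => huniq s s' j i)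

theorem forall_blocks_of_bijOn {M N : Type*} {p l : ℕ} {Φ : (Fin l → M) → N}
    {S : (Fin (p * l) → M) → ℕ → N}
    (hS : ∀ K (m : Fin p), S K (m + 1) = Φ fun s => K (finProdFinEquiv (m, s)))
    {X : Fin (p * l) → Set M} {Y : ℕ → Set N}
    (hΦ : ∀ m : Fin p, BijOn Φ {K | ∀ s, K s ∈ X (finProdFinEquiv (m, s))} (Y (m + 1))) :
    (∀ K, (∀ t, K t ∈ X t) → ∀ i ∈ Finset.Icc 1 p, S K i ∈ Y i) ∧
    (∀ K K', (∀ t, K t ∈ X t) → (∀ t, K' t ∈ X t) →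
      (∀ i ∈ Finset.Icc 1 p, S K i = S K' i) → K = K') ∧
    (∀ T : ℕ → N, (∀ i ∈ Finset.Icc 1 p, T i ∈ Y i) →
      ∃ K, (∀ t, K t ∈ X t) ∧ ∀ i ∈ Finset.Icc 1 p, S K i = T i) := by
  have hIcc {P : ℕ → Prop} : (∀ i ∈ Finset.Icc 1 p, P i) ↔ ∀ m : Fin p, P (m + 1) :=
    ⟨fun h m => h _ (Finset.mem_Icc.mpr ⟨by omega, m.isLt⟩), fun h i hi => by
      obtain ⟨hi1, hip⟩ := Finset.mem_Icc.mp hi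
      simpa [Nat.sub_add_cancel hi1] using h ⟨i - 1, by omega⟩⟩
  simp only [hIcc, hS]
  refine ⟨fun K hK m => (hΦ m).mapsTo fun s => hK _, fun K K' hK hK' hKK' => ?_, fun T hT => ?_⟩
  · funext t
    obtain ⟨⟨m, s⟩, rfl⟩ := finProdFinEquiv.surjective t
    exact congrFun ((hΦ m).injOn (fun s => hK _) (fun s => hK' _) (hKK' m)) s
  · choose B hB hBT using fun m => (hΦ m).surjOn (hT m)
    refine ⟨fun t => B (finProdFinEquiv.symm t).1 (finProdFinEquiv.symm t).2, fun t => ?_,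
      fun m => by simpa using hBT m⟩
    simpa only [Prod.mk.eta, Equiv.apply_symm_apply] using
      hB (finProdFinEquiv.symm t).1 (finProdFinEquiv.symm t).2

theorem exists_val_lt_iff_exists_finProdFinEquiv {p l : ℕ} (hp : 0 < p) {Q : Fin (p * l) → Prop} :
    (∃ t : Fin (p * l), (t : ℕ) < l ∧ Q t) ↔ ∃ s : Fin l, Q (finProdFinEquiv (⟨0, hp⟩, s)) := by
  refine ⟨fun ⟨t, ht, hQ⟩ => ⟨⟨t, ht⟩, ?_⟩, fun ⟨s, hQ⟩ => ⟨_, by simp, hQ⟩⟩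
  rwa [show finProdFinEquiv (⟨0, hp⟩, ⟨t, ht⟩) = t from Fin.ext (by simp)]

theorem stokesFactors_to_stokesMatrices_bijective_general (n k : ℕ) (hk : 2 ≤ k) (u : Fin n → ℂ)
    (θ₀ : ℝ) (l r : ℕ)
    (hl : {θ ∈ Set.Ico θ₀ (θ₀ + Real.pi / ((k : ℝ) - 1)) | IsAntiStokes u k θ}.ncard = l)
    (hr : r = (2 * k - 2) * l)
    (d : Fin r → ℝ) (hmono : StrictMono d)
    (hmem : ∀ t, d t ∈ Set.Ico θ₀ (θ₀ + 2 * Real.pi) ∧ IsAntiStokes u k (d t))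
    (hall : ∀ θ ∈ Set.Ico θ₀ (θ₀ + 2 * Real.pi), IsAntiStokes u k θ → ∃ t, d t = θ)
    (σ : Equiv.Perm (Fin n))
    (hσ : ∀ i j : Fin n, i ≠ j →
      ((∃ t : Fin r, (t : ℕ) < l ∧ IsRoot u k i j (d t)) ↔ σ i < σ j))
    (P : Matrix (Fin n) (Fin n) ℂ)
    (hP : ∀ i j : Fin n, P i j = if σ i = j then 1 else 0)
    (S : (Fin r → Matrix (Fin n) (Fin n) ℂ) → ℕ → Matrix (Fin n) (Fin n) ℂ)
    (hS : ∀ (K : Fin r → Matrix (Fin n) (Fin n) ℂ) (i : ℕ),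
      S K i = P⁻¹ * ((((List.ofFn K).drop ((i - 1) * l)).take l).reverse.prod) * P) :
    (∀ K : Fin r → Matrix (Fin n) (Fin n) ℂ, (∀ t, StoMem u k (d t) (K t)) →
      ∀ i ∈ Finset.Icc 1 (2 * k - 2),
        (Odd i → IsUpperUnipotent (S K i)) ∧ (Even i → IsLowerUnipotent (S K i))) ∧
    (∀ K K' : Fin r → Matrix (Fin n) (Fin n) ℂ,
      (∀ t, StoMem u k (d t) (K t)) → (∀ t, StoMem u k (d t) (K' t)) →
      (∀ i ∈ Finset.Icc 1 (2 * k - 2), S K i = S K' i) → K = K') ∧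
    (∀ T : ℕ → Matrix (Fin n) (Fin n) ℂ,
      (∀ i ∈ Finset.Icc 1 (2 * k - 2),
        (Odd i → IsUpperUnipotent (T i)) ∧ (Even i → IsLowerUnipotent (T i))) →
      ∃ K : Fin r → Matrix (Fin n) (Fin n) ℂ,
        (∀ t, StoMem u k (d t) (K t)) ∧ ∀ i ∈ Finset.Icc 1 (2 * k - 2), S K i = T i) := by
  subst hr
  have hp : 0 < 2 * k - 2 := by omega
  have hk' : (0 : ℝ) < k - 1 := sub_pos.mpr (by exact_mod_cast hk)
  have h2π : ((2 * k - 2 : ℕ) : ℝ) * (Real.pi / (k - 1)) = 2 * Real.pi := by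
    rw [Nat.cast_sub (by omega)]
    field_simp [hk'.ne']
    push_cast
    ring
  obtain ⟨b, hb_mono, hb, hdb⟩ := exists_eq_add_mul_of_periodic
    (div_pos Real.pi_pos hk') (isAntiStokes_periodic (by omega)) hp hl hmono <| by
      rw [h2π]
      ext θ
      exact ⟨fun ⟨t, ht⟩ => ht ▸ hmem t, fun hθ => hall θ hθ.1 hθ.2⟩
  have hσ' (i j) : (∃ s, IsRoot u k i j (b s)) ↔ σ i < σ j := by
    by_cases hij : i = j
    · subst hij
      simp [not_isRoot_self]
    simp [← hσ i j hij, exists_val_lt_iff_exists_finProdFinEquiv hp, hdb]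
  have hPσ : P = σ.permMatrix ℂ := Matrix.ext fun i j => by simp [hP, PEquiv.toMatrix_apply]
  subst hPσ
  refine forall_blocks_of_bijOn
    (Φ := fun K => (σ.permMatrix ℂ)⁻¹ * (List.ofFn K).reverse.prod * σ.permMatrix ℂ)
    (X := fun t => {K | StoMem u k (d t) K})
    (Y := fun i => {N | (Odd i → IsUpperUnipotent N) ∧ (Even i → IsLowerUnipotent N)})
    (fun K m => ?_) fun m => ?_
  · rw [hS, Nat.add_sub_cancel, List.take_drop_ofFn_finProdFinEquiv]
  · simpa only [hdb, Set.mem_ofPred_eq] using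
      bijOn_stokesMatrix_of_halfPeriod hk hb hb_mono.injective hσ' m

/-- **From Stokes factors to Stokes matrices over a full period.** Let `l` be the number of
anti-Stokes directions in the half-period `[θ₀, θ₀ + π/(k−1))` and let `d₁ < ⋯ < d_r`,
`r = (2k−2)l`, be the anti-Stokes directions in `[θ₀, θ₀ + 2π)`. Let `P` be the permutation
matrix (`P_{ij} = δ_{σ(i)j}`) of the total order determined by the first half-period, and
for a tuple `K` of Stokes factors set `Sᵢ := P⁻¹ · K_{il} ⋯ K_{(i−1)l+1} · P` for
`i = 1, …, 2k−2`. Then each `Sᵢ` is upper-triangular unipotent for odd `i` and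
lower-triangular unipotent for even `i`, and `(K₁, …, K_r) ↦ (S₁, …, S_{2k−2})` is a
bijection from `∏ₜ Sto(dₜ)` onto `(U₊ × U₋)^{k−1}`. -/
theorem stokesFactors_to_stokesMatrices_bijective (n k : ℕ) (hk : 2 ≤ k) (u : Fin n → ℂ)
    (hu : Function.Injective u) (θ₀ : ℝ) (l r : ℕ)
    (hl : {θ ∈ Set.Ico θ₀ (θ₀ + Real.pi / ((k : ℝ) - 1)) | IsAntiStokes u k θ}.ncard = l)
    (hr : r = (2 * k - 2) * l)
    (d : Fin r → ℝ) (hmono : StrictMono d)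
    (hmem : ∀ t, d t ∈ Set.Ico θ₀ (θ₀ + 2 * Real.pi) ∧ IsAntiStokes u k (d t))
    (hall : ∀ θ ∈ Set.Ico θ₀ (θ₀ + 2 * Real.pi), IsAntiStokes u k θ → ∃ t, d t = θ)
    (σ : Equiv.Perm (Fin n))
    (hσ : ∀ i j : Fin n, i ≠ j →
      ((∃ t : Fin r, (t : ℕ) < l ∧ IsRoot u k i j (d t)) ↔ σ i < σ j))
    (P : Matrix (Fin n) (Fin n) ℂ)
    (hP : ∀ i j : Fin n, P i j = if σ i = j then 1 else 0)
    (S : (Fin r → Matrix (Fin n) (Fin n) ℂ) → ℕ → Matrix (Fin n) (Fin n) ℂ)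
    (hS : ∀ (K : Fin r → Matrix (Fin n) (Fin n) ℂ) (i : ℕ),
      S K i = P⁻¹ * ((((List.ofFn K).drop ((i - 1) * l)).take l).reverse.prod) * P) :
    (∀ K : Fin r → Matrix (Fin n) (Fin n) ℂ, (∀ t, StoMem u k (d t) (K t)) →
      ∀ i ∈ Finset.Icc 1 (2 * k - 2),
        (Odd i → IsUpperUnipotent (S K i)) ∧ (Even i → IsLowerUnipotent (S K i))) ∧
    (∀ K K' : Fin r → Matrix (Fin n) (Fin n) ℂ,
      (∀ t, StoMem u k (d t) (K t)) → (∀ t, StoMem u k (d t) (K' t)) →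
      (∀ i ∈ Finset.Icc 1 (2 * k - 2), S K i = S K' i) → K = K') ∧
    (∀ T : ℕ → Matrix (Fin n) (Fin n) ℂ,
      (∀ i ∈ Finset.Icc 1 (2 * k - 2),
        (Odd i → IsUpperUnipotent (T i)) ∧ (Even i → IsLowerUnipotent (T i))) →
      ∃ K : Fin r → Matrix (Fin n) (Fin n) ℂ,
        (∀ t, StoMem u k (d t) (K t)) ∧ ∀ i ∈ Finset.Icc 1 (2 * k - 2), S K i = T i) :=
  stokesFactors_to_stokesMatrices_bijective_general n k hk u θ₀ l r hl hr d hmono hmem hall σ hσ P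
    hP S hS
end
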